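/- Let T = (V, E) be an infinite, locally finite tree with a distinguished root vertex o. Let u₀, u₁, …, u_k be a path in the subgraph of T induced on T_r such that every u_j has deg_{T_r}(u_j) = 2. Let S ⊆ V consist of the vertices u₀, …, u_k together with all vertices w ∉ T_r such that w lies in the connected component of some u_j in the subgraph of T induced on (V \ T_r) ∪ {u_j}. Then every edge of T with exactly one endpoint in S is incident to u₀ or to u_k; in particular, |∂S| ≤ deg(u₀) + deg(u_k). -/

import Mathlib

open SimpleGraph

variable {V : Type*}

/-- Reachability within a set `s`: there is a walk from `a` to `b` all of whose
vertices lie in `s` (i.e. reachability in the induced subgraph on `s`). -/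
def ReachableWithin (G : SimpleGraph V) (s : Set V) : V → V → Prop :=
  Relation.ReflTransGen (fun x y => G.Adj x y ∧ x ∈ s ∧ y ∈ s)

/-- The connected component of `u` in the subgraph of `G` induced on `s`. -/
def componentIn (G : SimpleGraph V) (s : Set V) (u : V) : Set V :=
  {w | w ∈ s ∧ ReachableWithin G s u w}

/-- The backbone of `G` relative to the vertex set `s`, rooted at `o`: vertices lying on
an infinite injective path starting at `o` all of whose vertices are in `s`. -/
def BackboneIn (G : SimpleGraph V) (s : Set V) (o : V) : Set V :=
  {v | ∃ f : ℕ → V, f 0 = o ∧ Function.Injective f ∧ (∀ n, f n ∈ s) ∧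
    (∀ n, G.Adj (f n) (f (n + 1))) ∧ ∃ k, f k = v}

/-- The backbone `T_r` of `G` rooted at `o`: vertices lying on an infinite injective
path starting at the root `o`. -/
def Backbone (G : SimpleGraph V) (o : V) : Set V :=
  BackboneIn G Set.univ o

/-- The edge boundary of a vertex set `S`: edges of `G` with exactly one endpoint in `S`. -/
def edgeBdry (G : SimpleGraph V) (S : Set V) : Set (Sym2 V) :=
  {e | ∃ a b : V, G.Adj a b ∧ e = s(a, b) ∧ a ∈ S ∧ b ∉ S}

/-- The degree of `u` in the subgraph of `G` induced on `s`. -/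
noncomputable def degIn (G : SimpleGraph V) (s : Set V) (u : V) : ℕ :=
  (G.neighborSet u ∩ s).ncard

/-- Condition (C1) with constant `M`: for every vertex `v`, every connected component of
the subgraph induced on `(V \ T_r) ∪ {v}` has at most `M` vertices. -/
def CondC1 (G : SimpleGraph V) (o : V) (M : ℕ) : Prop :=
  ∀ v u : V, u ∈ (Backbone G o)ᶜ ∪ {v} →
    (componentIn G ((Backbone G o)ᶜ ∪ {v}) u).ncard ≤ M

/-- Condition (C2) with constant `M`: there is no path `u 0, u 1, …, u M` in the subgraph
induced on the backbone `T_r` all of whose vertices have degree `2` in that subgraph. -/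
def CondC2 (G : SimpleGraph V) (o : V) (M : ℕ) : Prop :=
  ¬ ∃ u : ℕ → V, (∀ j, j ≤ M → u j ∈ Backbone G o) ∧
    (∀ j, j < M → G.Adj (u j) (u (j + 1))) ∧
    (∀ j k, j ≤ M → k ≤ M → u j = u k → j = k) ∧
    (∀ j, j ≤ M → degIn G (Backbone G o) (u j) = 2)

/-- Non-amenability: the edge boundary of every finite nonempty vertex set is at least a
fixed positive proportion of its size. -/
def NonAmenable (G : SimpleGraph V) : Prop :=
  ∃ c : ℝ, 0 < c ∧ ∀ S : Set V, S.Finite → S.Nonempty →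
    c * (S.ncard : ℝ) ≤ ((edgeBdry G S).ncard : ℝ)

/-- `K` is connected in `G`: any two vertices of `K` are joined by a walk inside `K`. -/
def ConnectedIn (G : SimpleGraph V) (K : Set V) : Prop :=
  ∀ a ∈ K, ∀ b ∈ K, ReachableWithin G K a b

/-- `|K|_D`: the sum over the vertices of the finite set `K` of their degrees in `G`. -/
noncomputable def degSumF (G : SimpleGraph V) (K : Finset V) : ℕ :=
  ∑ v ∈ K, (G.neighborSet v).ncard

/-- The edge-expansion constant `Φ_E(G)`. -/
noncomputable def expConst (G : SimpleGraph V) : ℝ :=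
  sInf {x : ℝ | ∃ K : Finset V, K.Nonempty ∧ ConnectedIn G ↑K ∧
    x = ((edgeBdry G ↑K).ncard : ℝ) / (degSumF G K : ℝ)}

/-!
Along the degree-2 stretch `u 0, …, u k`, each interior `u j` has exactly its two path
neighbours in the backbone, and off-backbone neighbours of `S` are swallowed into `S`.
So a boundary edge `ab` with `a ∈ S` has `b` in the backbone; if `a` were off the backbone,
hanging below some `u j`, then `b, a, …, u j` would be a second path between two backbone
vertices, besides the one inside the (connected) backbone, contradicting acyclicity.
Hence `a = u j`, and `j` must be `0` or `k`.
-/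

namespace ReachableWithin

variable {G : SimpleGraph V} {s : Set V} {x y : V}

theorem symm (h : ReachableWithin G s x y) : ReachableWithin G s y x :=
  have : Std.Symm (fun x y => G.Adj x y ∧ x ∈ s ∧ y ∈ s) :=
    ⟨fun _ _ ⟨hxy, hx, hy⟩ => ⟨hxy.symm, hy, hx⟩⟩
  Relation.ReflTransGen.stdSymm.symm _ _ h

theorem exists_walk (hx : x ∈ s) (h : ReachableWithin G s x y) :
    ∃ p : G.Walk x y, ∀ v ∈ p.support, v ∈ s := by
  induction h with
  | refl => exact ⟨.nil, by simpa using hx⟩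
  | tail _ hbc ih =>
    obtain ⟨p, hp⟩ := ih
    refine ⟨p.concat hbc.1, fun v hv => ?_⟩
    rw [SimpleGraph.Walk.support_concat, List.mem_append, List.mem_singleton] at hv
    rcases hv with hv | rfl
    · exact hp v hv
    · exact hbc.2.2

theorem exists_isPath [DecidableEq V] (hx : x ∈ s) (h : ReachableWithin G s x y) :
    ∃ p : G.Walk x y, p.IsPath ∧ ∀ v ∈ p.support, v ∈ s := by
  obtain ⟨p, hp⟩ := h.exists_walk hx
  exact ⟨p.bypass, p.bypass_isPath, fun v hv => hp v (p.support_bypass_subset_support hv)⟩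

end ReachableWithin

theorem mem_componentIn_of_adj {G : SimpleGraph V} {s : Set V} {v a b : V}
    (ha : a ∈ componentIn G s v) (hab : G.Adj a b) (hb : b ∈ s) : b ∈ componentIn G s v :=
  ⟨hb, ha.2.tail ⟨hab, ha.1, hb⟩⟩

theorem reachableWithin_backbone {G : SimpleGraph V} {o v : V} (h : v ∈ Backbone G o) :
    ReachableWithin G (Backbone G o) o v := by
  obtain ⟨f, rfl, hf, -, hfadj, n, rfl⟩ := h
  have hmem : ∀ m, f m ∈ Backbone G (f 0) := fun m =>
    ⟨f, rfl, hf, fun _ => trivial, hfadj, m, rfl⟩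
  induction n with
  | zero => exact .refl
  | succ n ih => exact ih.tail ⟨hfadj n, hmem n, hmem (n + 1)⟩

theorem connectedIn_backbone (G : SimpleGraph V) (o : V) : ConnectedIn G (Backbone G o) :=
  fun _ ha _ hb => (reachableWithin_backbone ha).symm.trans (reachableWithin_backbone hb)

namespace SimpleGraph.IsAcyclic

variable {G : SimpleGraph V} {K : Set V}

theorem support_subset_of_connectedIn (hG : G.IsAcyclic) (hK : ConnectedIn G K) {x y : V}
    (hx : x ∈ K) (hy : y ∈ K) (p : G.Walk x y) (hp : p.IsPath) :
    ∀ v ∈ p.support, v ∈ K := by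
  classical
  obtain ⟨q, hq, hqK⟩ := (hK x hx y hy).exists_isPath hx
  have : p = q := congrArg Subtype.val ((hG.subsingleton_path x y).elim ⟨p, hp⟩ ⟨q, hq⟩)
  exact this ▸ hqK

theorem eq_of_adj_of_mem_componentIn (hG : G.IsAcyclic) (hK : ConnectedIn G K) {v a b : V}
    (hv : v ∈ K) (ha : a ∈ componentIn G (Kᶜ ∪ {v}) v) (haK : a ∉ K) (hab : G.Adj a b)
    (hb : b ∈ K) : b = v := by
  classical
  by_contra hbv
  obtain ⟨p, hp, hpK⟩ := ha.2.exists_isPath (Set.mem_union_right _ (Set.mem_singleton v))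
  have hbp : b ∉ p.support := fun h => (hpK b h).elim (· hb) hbv
  have hpath : (Walk.cons hab.symm p.reverse).IsPath := by
    rw [Walk.cons_isPath_iff, Walk.support_reverse, List.mem_reverse]
    exact ⟨hp.reverse, hbp⟩
  refine haK (hG.support_subset_of_connectedIn hK hb hv _ hpath a ?_)
  rw [Walk.support_cons, Walk.support_reverse]
  exact List.mem_cons_of_mem _ (List.mem_reverse.mpr p.end_mem_support)

end SimpleGraph.IsAcyclic

theorem Set.eq_or_eq_of_ncard_eq_two {α : Type*} {t : Set α} {x y z : α} (ht : t.ncard = 2)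
    (hxy : x ≠ y) (hx : x ∈ t) (hy : y ∈ t) (hz : z ∈ t) : z = x ∨ z = y := by
  have hpair : {x, y} = t :=
    Set.eq_of_subset_of_ncard_le (Set.insert_subset hx (Set.singleton_subset_iff.mpr hy))
      (by rw [ht, Set.ncard_pair hxy]) (Set.finite_of_ncard_ne_zero (by omega))
  rwa [← hpair] at hz

theorem ncard_le_of_forall_mem_or_mem {G : SimpleGraph V} {E : Set (Sym2 V)} {x y : V}
    (hE : E ⊆ G.edgeSet) (hxy : ∀ e ∈ E, x ∈ e ∨ y ∈ e)
    (hx : (G.neighborSet x).Finite) (hy : (G.neighborSet y).Finite) :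
    E.ncard ≤ (G.neighborSet x).ncard + (G.neighborSet y).ncard := by
  classical
  have hcard (v : V) : (G.incidenceSet v).ncard = (G.neighborSet v).ncard :=
    Nat.card_congr (G.incidenceSetEquivNeighborSet v)
  have hfin {v : V} (hv : (G.neighborSet v).Finite) : (G.incidenceSet v).Finite :=
    have := hv.to_subtype
    have := Finite.of_equiv _ (G.incidenceSetEquivNeighborSet v).symm
    Set.toFinite _
  calc E.ncard ≤ (G.incidenceSet x ∪ G.incidenceSet y).ncard :=
        Set.ncard_le_ncard (fun e he => (hxy e he).imp (⟨hE he, ·⟩) (⟨hE he, ·⟩))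
          ((hfin hx).union (hfin hy))
    _ ≤ _ := (Set.ncard_union_le _ _).trans_eq (by rw [hcard, hcard])

theorem edgeBdry_subset_edgeSet (G : SimpleGraph V) (S : Set V) : edgeBdry G S ⊆ G.edgeSet := by
  rintro _ ⟨a, b, hab, rfl, -⟩
  exact hab

section DegreeTwoPath

variable {G : SimpleGraph V} {o : V} {k : ℕ} {u : ℕ → V}

theorem eq_endpoint_of_adj_of_degIn_eq_two
    (hB : ∀ j, j ≤ k → u j ∈ Backbone G o)
    (hadj : ∀ j, j < k → G.Adj (u j) (u (j + 1)))
    (hinj : ∀ i j, i ≤ k → j ≤ k → u i = u j → i = j)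
    (hdeg2 : ∀ j, j ≤ k → degIn G (Backbone G o) (u j) = 2)
    {j : ℕ} (hj : j ≤ k) {b : V} (hb : b ∈ Backbone G o) (hub : G.Adj (u j) b)
    (hbu : ∀ i ≤ k, b ≠ u i) : j = 0 ∨ j = k := by
  by_contra! hjk
  obtain ⟨i, rfl⟩ : ∃ i, j = i + 1 := Nat.exists_eq_succ_of_ne_zero hjk.1
  have hi2 : i + 2 ≤ k := by omega
  have hne : u i ≠ u (i + 2) := fun h => by have := hinj i (i + 2) (by omega) hi2 h; omega
  rcases Set.eq_or_eq_of_ncard_eq_two (hdeg2 (i + 1) hj) hne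
    ⟨(hadj i (by omega)).symm, hB i (by omega)⟩ ⟨hadj (i + 1) (by omega), hB (i + 2) hi2⟩
    ⟨hub, hb⟩ with h | h
  · exact hbu i (by omega) h
  · exact hbu (i + 2) hi2 h

theorem eq_end_of_adj_of_mem_of_notMem (hG : G.IsAcyclic)
    (hB : ∀ j, j ≤ k → u j ∈ Backbone G o)
    (hadj : ∀ j, j < k → G.Adj (u j) (u (j + 1)))
    (hinj : ∀ i j, i ≤ k → j ≤ k → u i = u j → i = j)
    (hdeg2 : ∀ j, j ≤ k → degIn G (Backbone G o) (u j) = 2)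
    {S : Set V}
    (hS : S = {w | ∃ j ≤ k, w = u j} ∪
      {w | w ∉ Backbone G o ∧
        ∃ j ≤ k, w ∈ componentIn G ((Backbone G o)ᶜ ∪ {u j}) (u j)})
    {a b : V} (hab : G.Adj a b) (ha : a ∈ S) (hb : b ∉ S) : a = u 0 ∨ a = u k := by
  have hmemS :
      ∀ w, w ∈ S ↔ ∃ j ≤ k, w ∈ componentIn G ((Backbone G o)ᶜ ∪ {u j}) (u j) := by
    intro w
    rw [hS]
    constructor
    · rintro (⟨j, hj, rfl⟩ | ⟨-, j, hj, hw⟩)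
      exacts [⟨j, hj, Or.inr rfl, .refl⟩, ⟨j, hj, hw⟩]
    · rintro ⟨j, hj, hw⟩
      rcases hw.1 with hwB | rfl
      exacts [Or.inr ⟨hwB, j, hj, hw⟩, Or.inl ⟨j, hj, rfl⟩]
  have huS : ∀ i ≤ k, u i ∈ S := fun i hi => (hmemS _).2 ⟨i, hi, Or.inr rfl, .refl⟩
  obtain ⟨j, hj, haj⟩ := (hmemS a).1 ha
  have hbB : b ∈ Backbone G o := by
    by_contra hbB
    exact hb ((hmemS b).2 ⟨j, hj, mem_componentIn_of_adj haj hab (Or.inl hbB)⟩)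
  obtain rfl : a = u j := by
    by_contra hne
    have haB : a ∉ Backbone G o := haj.1.resolve_right hne
    have := hG.eq_of_adj_of_mem_componentIn (connectedIn_backbone G o) (hB j hj) haj haB hab hbB
    exact hb (this ▸ huS j hj)
  rcases eq_endpoint_of_adj_of_degIn_eq_two hB hadj hinj hdeg2 hj hbB hab
    (fun i hi h => hb (h ▸ huS i hi)) with rfl | rfl
  exacts [Or.inl rfl, Or.inr rfl]

end DegreeTwoPath

theorem statement8_general {V : Type*} (G : SimpleGraph V) (o : V)
    (hT : G.IsTree)
    (hlf : ∀ v : V, (G.neighborSet v).Finite)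
    (k : ℕ) (u : ℕ → V)
    (hB : ∀ j, j ≤ k → u j ∈ Backbone G o)
    (hadj : ∀ j, j < k → G.Adj (u j) (u (j + 1)))
    (hinj : ∀ i j, i ≤ k → j ≤ k → u i = u j → i = j)
    (hdeg2 : ∀ j, j ≤ k → degIn G (Backbone G o) (u j) = 2)
    (S : Set V)
    (hS : S = {w | ∃ j ≤ k, w = u j} ∪
      {w | w ∉ Backbone G o ∧
        ∃ j ≤ k, w ∈ componentIn G ((Backbone G o)ᶜ ∪ {u j}) (u j)}) :
    (∀ e ∈ edgeBdry G S, u 0 ∈ e ∨ u k ∈ e) ∧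
    (edgeBdry G S).ncard ≤
      (G.neighborSet (u 0)).ncard + (G.neighborSet (u k)).ncard := by
  have hends : ∀ e ∈ edgeBdry G S, u 0 ∈ e ∨ u k ∈ e := by
    rintro e ⟨a, b, hab, rfl, ha, hb⟩
    rcases eq_end_of_adj_of_mem_of_notMem hT.isAcyclic hB hadj hinj hdeg2 hS hab ha hb
      with rfl | rfl
    exacts [Or.inl (Sym2.mem_mk_left _ _), Or.inr (Sym2.mem_mk_left _ _)]
  exact ⟨hends,
    ncard_le_of_forall_mem_or_mem (edgeBdry_subset_edgeSet G S) hends (hlf _) (hlf _)⟩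

/-- For a degree-2 (in the backbone) path `u 0, …, u k` of the backbone,
every boundary edge of the path together with the attached off-backbone components is
incident to `u 0` or `u k`; in particular `|∂S| ≤ deg (u 0) + deg (u k)`. -/
theorem statement8 {V : Type*} (G : SimpleGraph V) (o : V)
    (hT : G.IsTree) (hinf : Infinite V)
    (hlf : ∀ v : V, (G.neighborSet v).Finite)
    (k : ℕ) (u : ℕ → V)
    (hB : ∀ j, j ≤ k → u j ∈ Backbone G o)
    (hadj : ∀ j, j < k → G.Adj (u j) (u (j + 1)))
    (hinj : ∀ i j, i ≤ k → j ≤ k → u i = u j → i = j)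
    (hdeg2 : ∀ j, j ≤ k → degIn G (Backbone G o) (u j) = 2)
    (S : Set V)
    (hS : S = {w | ∃ j ≤ k, w = u j} ∪
      {w | w ∉ Backbone G o ∧
        ∃ j ≤ k, w ∈ componentIn G ((Backbone G o)ᶜ ∪ {u j}) (u j)}) :
    (∀ e ∈ edgeBdry G S, u 0 ∈ e ∨ u k ∈ e) ∧
    (edgeBdry G S).ncard ≤
      (G.neighborSet (u 0)).ncard + (G.neighborSet (u k)).ncard :=
  statement8_general G o hT hlf k u hB hadj hinj hdeg2 S hS
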